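/- In the category of sets (Type u), every pullback stable essential monomorphism is an isomorphism. -/

import Mathlib

open CategoryTheory Limits

universe u

/-- A morphism `m` is an essential monomorphism if it is a monomorphism and every
morphism `f` such that `m ≫ f` is a monomorphism is itself a monomorphism. -/
def IsEssentialMono {C : Type*} [CategoryTheory.Category C] {S A : C} (m : S ⟶ A) : Prop :=
  CategoryTheory.Mono m ∧
    ∀ ⦃B : C⦄ (f : A ⟶ B), CategoryTheory.Mono (m ≫ f) → CategoryTheory.Mono f

/-- A morphism `m : S ⟶ A` is a pullback stable essential monomorphism if for every
morphism `u : X ⟶ A` the pullback projection `S ×_A X ⟶ X` of `m` along `u` is an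
essential monomorphism. -/
def IsStableEssentialMono {C : Type*} [CategoryTheory.Category C]
    [CategoryTheory.Limits.HasPullbacks C] {S A : C} (m : S ⟶ A) : Prop :=
  ∀ ⦃X : C⦄ (u : X ⟶ A), IsEssentialMono (CategoryTheory.Limits.pullback.snd m u)

/-! Pulling `m` back along `𝟙 A` shows that `m` is mono. If `a ∉ range m`, pull `m` back along
the constant map `ULift Bool ⟶ A` at `a`. The pullback is empty, so its projection composed with
`ULift Bool ⟶ PUnit` is (vacuously) injective; essentiality of the projection then makes the map
from the two-point set to the point injective, which is absurd. -/

theorem IsStableEssentialMono.mono {C : Type*} [Category C] [HasPullbacks C] {S A : C}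
    {m : S ⟶ A} (h : IsStableEssentialMono m) : Mono m := by
  have : Mono (pullback.snd m (𝟙 A)) := (h (𝟙 A)).1
  have hm : m = inv (pullback.fst m (𝟙 A)) ≫ pullback.snd m (𝟙 A) := by
    rw [IsIso.eq_inv_comp, pullback.condition, Category.comp_id]
  rw [hm]
  infer_instance

theorem IsEssentialMono.subsingleton_of_isEmpty {S A : Type u} {m : S ⟶ A} [IsEmpty S]
    (h : IsEssentialMono m) : Subsingleton A := by
  have hf := h.2 (TypeCat.ofHom fun _ => PUnit.unit : A ⟶ PUnit.{u + 1})
    ((mono_iff_injective _).2 isEmptyElim)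
  exact ⟨fun a b => (mono_iff_injective _).1 hf rfl⟩

theorem isEmpty_pullback_of_notMem_range {S A X : Type u} (m : S ⟶ A) (u : X ⟶ A)
    (hu : ∀ x, u x ∉ Set.range m) : IsEmpty (pullback m u) :=
  ⟨fun p => hu (pullback.snd m u p)
    ⟨pullback.fst m u p, ConcreteCategory.congr_hom (pullback.condition (f := m) (g := u)) p⟩⟩

theorem IsStableEssentialMono.surjective {S A : Type u} {m : S ⟶ A}
    (h : IsStableEssentialMono m) : Function.Surjective m := by
  intro a
  by_contra ha
  let u : ULift.{u} Bool ⟶ A := TypeCat.ofHom fun _ => a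
  have : IsEmpty (pullback m u) := isEmpty_pullback_of_notMem_range m u fun _ => ha
  have := (h u).subsingleton_of_isEmpty
  exact absurd (Subsingleton.elim (ULift.up false) (ULift.up true)) (by simp)

/-- In the category of sets, every pullback stable essential monomorphism is an
isomorphism. -/
theorem stableEssentialMono_in_types_isIso {S A : Type u} (m : S ⟶ A)
    (h : IsStableEssentialMono m) : IsIso m :=
  (isIso_iff_bijective m).2 ⟨(mono_iff_injective m).1 h.mono, h.surjective⟩
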